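/- Let F be a field, R = F[X,Y,Z], n ≥ 2 an integer, and let I be the ideal generated by the monomials X^iY^{2n-i}Z for 0 ≤ i ≤ 2n with i ≠ n, together with X^nY^{n+1} and X^{n+1}Y^n. Then ~I : (X^nY^n) = (X,Y,Z): explicitly, X^nY^n ∉ ~I, (X,Y)·X^nY^n ⊆ I, and X^nY^nZ ∈ I^2 : I ⊆ ~I. Consequently the maximal ideal (X,Y,Z) is an associated prime of R/~I, although it is not an associated prime of R/I (the associated primes of I are (X,Y), (X,Z), (Y,Z)). -/

import Mathlib

/-!
All generators of `I` are monomials of degree `2n + 1`, so `Iᵏ ⊆ 𝔪^{(2n+1)k}` for the ideal of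
variables `𝔪 = (X, Y, Z)`. Since `X^n Y^{n+1} ∈ I`, a relation `X^n Y^n Iᵏ ⊆ Iᵏ⁺¹` would put the
monomial `X^n Y^n (X^n Y^{n+1})ᵏ`, of degree `(2n+1)(k+1) - 1`, into `𝔪^{(2n+1)(k+1)}`; hence
`X^n Y^n ∉ ~I`. On the other hand `X · X^n Y^n` and `Y · X^n Y^n` are generators of `I`, and
`X^n Y^n Z` times any generator is a product of two generators, so the maximal ideal `𝔪` is
contained in, hence equal to, the proper ideal `~I : X^n Y^n`.

For `I` itself, comparing exponent vectors shows that `X r, Y r, Z r ∈ I` force `r ∈ I`, so `𝔪`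
annihilates no nonzero element of `R/I`.
-/

/-- The Ratliff-Rush closure of the power `I^n`:  `⋃_{k≥0} (I^{n+k} : I^k)`. -/
noncomputable def rrPow {R : Type*} [CommRing R] (I : Ideal R) (n : ℕ) : Ideal R :=
  ⨆ k : ℕ, (I ^ (n + k)).colon (I ^ k : Ideal R)

section RatliffRush

variable {R : Type*} [CommRing R] (I : Ideal R)

lemma mem_colon_iff_span_singleton_mul_le {J K : Ideal R} {x : R} :
    x ∈ J.colon (K : Set R) ↔ Ideal.span {x} * K ≤ J := by
  rw [Submodule.mem_colon, Ideal.span_singleton_mul_le_iff]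
  rfl

lemma colon_pow_le_colon_pow_succ (m k : ℕ) :
    (I ^ (m + k)).colon (I ^ k : Ideal R) ≤ (I ^ (m + (k + 1))).colon (I ^ (k + 1) : Ideal R) := by
  intro x hx
  rw [mem_colon_iff_span_singleton_mul_le] at hx ⊢
  rw [pow_succ, ← add_assoc, pow_succ, ← mul_assoc]
  exact Ideal.mul_mono_left hx

lemma mem_rrPow_iff {m : ℕ} {x : R} :
    x ∈ rrPow I m ↔ ∃ k, x ∈ (I ^ (m + k)).colon (I ^ k : Ideal R) :=
  Submodule.mem_iSup_of_directed _
    (monotone_nat_of_le_succ (colon_pow_le_colon_pow_succ I m)).directed_le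

lemma colon_pow_le_rrPow (m k : ℕ) : (I ^ (m + k)).colon (I ^ k : Ideal R) ≤ rrPow I m :=
  le_iSup (fun k ↦ (I ^ (m + k)).colon (I ^ k : Ideal R)) k

lemma le_rrPow_one : I ≤ rrPow I 1 :=
  calc I = I ^ (1 + 0) := by simp
    _ ≤ (I ^ (1 + 0)).colon (I ^ 0 : Ideal R) := Ideal.le_colon
    _ ≤ rrPow I 1 := colon_pow_le_rrPow I 1 0

lemma sq_colon_le_rrPow_one : (I ^ 2).colon I ≤ rrPow I 1 := by
  simpa using colon_pow_le_rrPow I 1 1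

end RatliffRush

section AssociatedPrime

variable {R : Type*} [CommRing R] {I P : Ideal R}

lemma colon_bot_singleton_mk (r : R) :
    (⊥ : Submodule R (R ⧸ I)).colon {Ideal.Quotient.mk I r} = I.colon {r} := by
  ext a
  rw [Submodule.mem_colon_singleton, Submodule.mem_colon_singleton, Submodule.mem_bot,
    Algebra.smul_def, Ideal.Quotient.algebraMap_eq, ← map_mul, Ideal.Quotient.eq_zero_iff_mem,
    smul_eq_mul]

lemma isAssociatedPrime_quotient_of_colon_eq (hP : P.IsPrime) {r : R} (h : I.colon {r} = P) :
    IsAssociatedPrime P (R ⧸ I) :=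
  ⟨hP, Ideal.Quotient.mk I r, by rw [colon_bot_singleton_mk, h, hP.radical]⟩

lemma not_isAssociatedPrime_quotient [IsNoetherianRing R] (h : ∀ r, P ≤ I.colon {r} → r ∈ I) :
    ¬IsAssociatedPrime P (R ⧸ I) := by
  rw [isAssociatedPrime_iff]
  rintro ⟨hP, x, hx⟩
  obtain ⟨r, rfl⟩ := Ideal.Quotient.mk_surjective x
  rw [colon_bot_singleton_mk] at hx
  have hr := h r hx.le
  exact hP.ne_top (by rwa [hx, Submodule.colon_eq_top_iff_subset, Set.singleton_subset_iff])

end AssociatedPrime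

namespace MvPolynomial

variable {σ R : Type*}

lemma mem_span_monomial_of_forall_X_mul_mem [CommSemiring R] {G : Set (σ →₀ ℕ)}
    (hG : ∀ d, (∀ i, ∃ g ∈ G, g ≤ Finsupp.single i 1 + d) → ∃ g ∈ G, g ≤ d)
    {r : MvPolynomial σ R} (hr : ∀ i, X i * r ∈ Ideal.span ((monomial · 1) '' G)) :
    r ∈ Ideal.span ((monomial · (1 : R)) '' G) := by
  simp only [mem_ideal_span_monomial_image] at hr ⊢
  refine fun d hd ↦ hG d fun i ↦ hr i _ ?_
  rwa [mem_support_iff, coeff_X_mul, ← mem_support_iff]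

lemma monomial_mem_sq_colon [CommSemiring R] {G : Set (σ →₀ ℕ)} {x : σ →₀ ℕ}
    (h : ∀ g ∈ G, ∃ g₁ ∈ G, ∃ g₂ ∈ G, x + g = g₁ + g₂) :
    monomial x (1 : R) ∈
      (Ideal.span ((monomial · 1) '' G) ^ 2).colon (Ideal.span ((monomial · (1 : R)) '' G)) := by
  rw [Ideal.colon_span, Submodule.mem_colon]
  rintro _ ⟨g, hg, rfl⟩
  obtain ⟨g₁, hg₁, g₂, hg₂, hsum⟩ := h g hg
  rw [smul_eq_mul, monomial_mul, hsum, ← one_mul (1 : R), ← monomial_mul, pow_two]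
  exact Ideal.mul_mem_mul (Ideal.subset_span ⟨g₁, hg₁, rfl⟩) (Ideal.subset_span ⟨g₂, hg₂, rfl⟩)

lemma monomial_not_mem_rrPow_one [CommRing R] [Nontrivial R] {I : Ideal (MvPolynomial σ R)}
    {e : ℕ} (hI : I ≤ idealOfVars σ R ^ e) {u v : σ →₀ ℕ} (hv : monomial v 1 ∈ I)
    (hve : v.degree ≤ e) (hue : u.degree < e) : monomial u (1 : R) ∉ rrPow I 1 := by
  rw [mem_rrPow_iff]
  rintro ⟨k, hk⟩
  have hmem := Submodule.mem_colon.mp hk _ (Ideal.pow_mem_pow hv k)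
  rw [smul_eq_mul, monomial_pow, one_pow, monomial_mul, one_mul] at hmem
  have hdeg := (monomial_mem_pow_idealOfVars_iff _ _ one_ne_zero).mp
    ((Ideal.pow_right_mono hI _).trans_eq (pow_mul ..).symm hmem)
  rw [map_add, map_nsmul, smul_eq_mul] at hdeg
  nlinarith

lemma idealOfVars_eq_ker_constantCoeff [CommSemiring R] :
    idealOfVars σ R = RingHom.ker (constantCoeff (σ := σ) (R := R)) := by
  ext p
  rw [← pow_one (idealOfVars σ R), mem_pow_idealOfVars_iff', RingHom.mem_ker, constantCoeff_eq]
  simp [Finsupp.degree_eq_zero_iff]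

variable (σ R) in
lemma isMaximal_idealOfVars [Field R] : (idealOfVars σ R).IsMaximal := by
  rw [idealOfVars_eq_ker_constantCoeff]
  exact RingHom.ker_isMaximal_of_surjective _ fun r ↦ ⟨C r, constantCoeff_C _ _⟩

end MvPolynomial

section MonomialIdeal

open MvPolynomial

noncomputable def xyzExp (a b c : ℕ) : Fin 3 →₀ ℕ :=
  Finsupp.single 0 a + Finsupp.single 1 b + Finsupp.single 2 c

@[simp] lemma xyzExp_apply_zero (a b c : ℕ) : xyzExp a b c 0 = a := by simp [xyzExp]
@[simp] lemma xyzExp_apply_one (a b c : ℕ) : xyzExp a b c 1 = b := by simp [xyzExp]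
@[simp] lemma xyzExp_apply_two (a b c : ℕ) : xyzExp a b c 2 = c := by simp [xyzExp]

lemma xyzExp_le_iff {a b c : ℕ} {d : Fin 3 →₀ ℕ} :
    xyzExp a b c ≤ d ↔ a ≤ d 0 ∧ b ≤ d 1 ∧ c ≤ d 2 := by
  simp [Finsupp.le_def, Fin.forall_fin_succ]

lemma xyzExp_add_xyzExp (a b c a' b' c' : ℕ) :
    xyzExp a b c + xyzExp a' b' c' = xyzExp (a + a') (b + b') (c + c') := by
  ext i; fin_cases i <;> simp

lemma degree_xyzExp (a b c : ℕ) : (xyzExp a b c).degree = a + b + c := by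
  simp [xyzExp]

def genSet (n : ℕ) : Set (Fin 3 →₀ ℕ) :=
  {s | ∃ i ≤ 2 * n, i ≠ n ∧ s = xyzExp i (2 * n - i) 1} ∪
    {xyzExp n (n + 1) 0, xyzExp (n + 1) n 0}

lemma degree_of_mem_genSet {n : ℕ} {s : Fin 3 →₀ ℕ} (hs : s ∈ genSet n) :
    s.degree = 2 * n + 1 := by
  rcases hs with ⟨i, hi, -, rfl⟩ | rfl | rfl <;> simp [degree_xyzExp] <;> omega

lemma exists_genSet_le_iff {n : ℕ} {d : Fin 3 →₀ ℕ} :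
    (∃ g ∈ genSet n, g ≤ d) ↔
      (n ≤ d 0 ∧ n ≤ d 1 ∧ 2 * n + 1 ≤ d 0 + d 1) ∨
        (1 ≤ d 2 ∧ 2 * n ≤ d 0 + d 1 ∧ (d 0 ≠ n ∨ d 1 ≠ n)) := by
  constructor
  · rintro ⟨g, ⟨i, hi, hin, rfl⟩ | rfl | rfl, hle⟩ <;> rw [xyzExp_le_iff] at hle <;> omega
  · intro h
    by_cases hAB : n ≤ d 0 ∧ n ≤ d 1 ∧ 2 * n + 1 ≤ d 0 + d 1
    · by_cases hY : n + 1 ≤ d 1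
      · exact ⟨_, Or.inr (Or.inl rfl), xyzExp_le_iff.mpr ⟨by omega, hY, by omega⟩⟩
      · exact ⟨_, Or.inr (Or.inr rfl), xyzExp_le_iff.mpr ⟨by omega, by omega, by omega⟩⟩
    · obtain hX | hY : d 0 < n ∨ d 1 < n := by omega
      · exact ⟨_, Or.inl ⟨d 0, by omega, by omega, rfl⟩,
          xyzExp_le_iff.mpr ⟨le_rfl, by omega, by omega⟩⟩
      · exact ⟨_, Or.inl ⟨2 * n - d 1, by omega, by omega, rfl⟩,
          xyzExp_le_iff.mpr ⟨by omega, by omega, by omega⟩⟩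

lemma exists_genSet_le_of_forall_single_add {n : ℕ} {d : Fin 3 →₀ ℕ}
    (h : ∀ i, ∃ g ∈ genSet n, g ≤ Finsupp.single i 1 + d) : ∃ g ∈ genSet n, g ≤ d := by
  have h0 := exists_genSet_le_iff.mp (h 0)
  have h1 := exists_genSet_le_iff.mp (h 1)
  have h2 := exists_genSet_le_iff.mp (h 2)
  simp only [Finsupp.coe_add, Pi.add_apply, Finsupp.single_apply, Fin.reduceEq, ↓reduceIte]
    at h0 h1 h2
  rw [exists_genSet_le_iff]
  omega

lemma exists_genSet_add_eq {n : ℕ} (hn : 2 ≤ n) :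
    ∀ g ∈ genSet n, ∃ g₁ ∈ genSet n, ∃ g₂ ∈ genSet n, xyzExp n n 1 + g = g₁ + g₂ := by
  rintro _ (⟨i, hi, hin, rfl⟩ | rfl | rfl)
  · -- split `n + i` as `j + k` with `j, k ≠ n`
    obtain ⟨j, k, hj, hjn, hk, hkn, hjk⟩ :
        ∃ j k, j ≤ 2 * n ∧ j ≠ n ∧ k ≤ 2 * n ∧ k ≠ n ∧ j + k = n + i := by
      rcases Nat.lt_or_ge i n with hlt | hge
      · rcases Nat.eq_zero_or_pos i with rfl | hpos
        · exact ⟨1, n - 1, by omega, by omega, by omega, by omega, by omega⟩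
        · exact ⟨0, n + i, by omega, by omega, by omega, by omega, by omega⟩
      · rcases Nat.lt_or_ge i (2 * n) with hlt | hge'
        · exact ⟨2 * n, i - n, by omega, by omega, by omega, by omega, by omega⟩
        · exact ⟨2 * n - 1, n + 1, by omega, by omega, by omega, by omega, by omega⟩
    refine ⟨_, Or.inl ⟨j, hj, hjn, rfl⟩, _, Or.inl ⟨k, hk, hkn, rfl⟩, ?_⟩
    simp only [xyzExp_add_xyzExp]
    congr 1 <;> omega
  · refine ⟨_, Or.inl ⟨n - 1, by omega, by omega, rfl⟩, _, Or.inr (Or.inr rfl), ?_⟩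
    simp only [xyzExp_add_xyzExp]
    congr 1 <;> omega
  · refine ⟨_, Or.inl ⟨n + 1, by omega, by omega, rfl⟩, _, Or.inr (Or.inl rfl), ?_⟩
    simp only [xyzExp_add_xyzExp]
    congr 1 <;> omega

variable {R : Type*}

lemma X_pow_mul_X_pow_mul_X_pow [CommSemiring R] (a b c : ℕ) :
    (X 0 : MvPolynomial (Fin 3) R) ^ a * X 1 ^ b * X 2 ^ c = monomial (xyzExp a b c) 1 := by
  simp only [X_pow_eq_monomial, monomial_mul, mul_one, xyzExp]

lemma X_pow_mul_X_pow [CommSemiring R] (a b : ℕ) :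
    (X 0 : MvPolynomial (Fin 3) R) ^ a * X 1 ^ b = monomial (xyzExp a b 0) 1 := by
  rw [← X_pow_mul_X_pow_mul_X_pow, pow_zero, mul_one]

lemma X_pow_mul_X_pow_mul_X [CommSemiring R] (a b : ℕ) :
    (X 0 : MvPolynomial (Fin 3) R) ^ a * X 1 ^ b * X 2 = monomial (xyzExp a b 1) 1 := by
  rw [← X_pow_mul_X_pow_mul_X_pow, pow_one]

variable (R) in
noncomputable def genIdeal [CommSemiring R] (n : ℕ) : Ideal (MvPolynomial (Fin 3) R) :=
  Ideal.span ((monomial · 1) '' genSet n)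

lemma span_generators_eq [CommSemiring R] (n : ℕ) :
    Ideal.span
      ({p | ∃ i : ℕ, i ≤ 2 * n ∧ i ≠ n ∧
          p = (X 0 : MvPolynomial (Fin 3) R) ^ i * X 1 ^ (2 * n - i) * X 2} ∪
        {X 0 ^ n * X 1 ^ (n + 1), X 0 ^ (n + 1) * X 1 ^ n}) = genIdeal R n := by
  simp only [X_pow_mul_X_pow_mul_X]
  simp only [genIdeal, genSet, Set.image_union, Set.image_insert_eq, Set.image_singleton,
    X_pow_mul_X_pow]
  congr 3
  ext p
  simp [eq_comm, and_assoc]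

lemma span_X_fin_three [CommSemiring R] :
    Ideal.span {(X 0 : MvPolynomial (Fin 3) R), X 1, X 2} = idealOfVars (Fin 3) R := by
  congr
  ext p
  simp [Fin.exists_fin_succ, eq_comm]

lemma monomial_mem_genIdeal [CommSemiring R] {n : ℕ} {s : Fin 3 →₀ ℕ} (hs : s ∈ genSet n) :
    monomial s 1 ∈ genIdeal R n :=
  Ideal.subset_span ⟨s, hs, rfl⟩

lemma span_X_zero_X_one_le_colon_genIdeal [CommSemiring R] (n : ℕ) :
    Ideal.span {X 0, X 1} ≤
      (genIdeal R n).colon (Ideal.span {(X 0 ^ n * X 1 ^ n : MvPolynomial (Fin 3) R)}) := by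
  have hX : X 0 * (X 0 ^ n * X 1 ^ n) ∈ genIdeal R n := by
    rw [← mul_assoc, ← pow_succ', X_pow_mul_X_pow]
    exact monomial_mem_genIdeal (Or.inr (Or.inr rfl))
  have hY : X 1 * (X 0 ^ n * X 1 ^ n) ∈ genIdeal R n := by
    rw [mul_left_comm, ← pow_succ', X_pow_mul_X_pow]
    exact monomial_mem_genIdeal (Or.inr (Or.inl rfl))
  simp [Ideal.span_le, Set.insert_subset_iff, hX, hY]

lemma X_pow_mul_X_pow_mul_X_mem_sq_colon_genIdeal [CommSemiring R] {n : ℕ} (hn : 2 ≤ n) :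
    X 0 ^ n * X 1 ^ n * X 2 ∈ (genIdeal R n ^ 2).colon (genIdeal R n) := by
  rw [X_pow_mul_X_pow_mul_X]
  exact monomial_mem_sq_colon (exists_genSet_add_eq hn)

lemma genIdeal_le_pow_idealOfVars [CommSemiring R] [Nontrivial R] (n : ℕ) :
    genIdeal R n ≤ idealOfVars (Fin 3) R ^ (2 * n + 1) :=
  Ideal.span_le.mpr <| by
    rintro _ ⟨g, hg, rfl⟩
    exact (monomial_mem_pow_idealOfVars_iff _ _ one_ne_zero).mpr (degree_of_mem_genSet hg).ge

lemma X_pow_mul_X_pow_not_mem_rrPow_genIdeal [CommRing R] [Nontrivial R] (n : ℕ) :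
    (X 0 ^ n * X 1 ^ n : MvPolynomial (Fin 3) R) ∉ rrPow (genIdeal R n) 1 := by
  have hv : xyzExp n (n + 1) 0 ∈ genSet n := Or.inr (Or.inl rfl)
  rw [X_pow_mul_X_pow]
  exact monomial_not_mem_rrPow_one (genIdeal_le_pow_idealOfVars n) (monomial_mem_genIdeal hv)
    (degree_of_mem_genSet hv).le (by rw [degree_xyzExp]; omega)

lemma colon_rrPow_genIdeal [Field R] {n : ℕ} (hn : 2 ≤ n) :
    (rrPow (genIdeal R n) 1).colon (Ideal.span {(X 0 ^ n * X 1 ^ n : MvPolynomial (Fin 3) R)}) =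
      idealOfVars (Fin 3) R := by
  refine ((isMaximal_idealOfVars (Fin 3) R).eq_of_le ?_ ?_).symm
  · exact mt (Submodule.colon_eq_top_iff_subset _).mp
      fun h ↦ X_pow_mul_X_pow_not_mem_rrPow_genIdeal n (h (Ideal.subset_span rfl))
  · have hXY := (span_X_zero_X_one_le_colon_genIdeal n).trans
      (Submodule.colon_mono (le_rrPow_one (genIdeal R n)) le_rfl)
    rw [← span_X_fin_three, Ideal.span_le, Set.insert_subset_iff, Set.insert_subset_iff,
      Set.singleton_subset_iff]
    refine ⟨hXY (Ideal.subset_span (by simp)), hXY (Ideal.subset_span (by simp)), ?_⟩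
    rw [SetLike.mem_coe, Ideal.mem_colon_span_singleton, mul_comm]
    exact sq_colon_le_rrPow_one _ (X_pow_mul_X_pow_mul_X_mem_sq_colon_genIdeal hn)

lemma not_isAssociatedPrime_idealOfVars_genIdeal [CommRing R] [IsNoetherianRing R] (n : ℕ) :
    ¬IsAssociatedPrime (idealOfVars (Fin 3) R) (MvPolynomial (Fin 3) R ⧸ genIdeal R n) := by
  refine not_isAssociatedPrime_quotient fun r hr ↦
    mem_span_monomial_of_forall_X_mul_mem (fun _ ↦ exists_genSet_le_of_forall_single_add)
      fun i ↦ ?_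
  simpa [Submodule.mem_colon_singleton, genIdeal] using hr (Ideal.subset_span ⟨i, rfl⟩)

end MonomialIdeal

/-- Let `R = F[X,Y,Z]`, `n ≥ 2`, and `I` the ideal generated by the monomials
`X^iY^{2n-i}Z` for `0 ≤ i ≤ 2n`, `i ≠ n`, together with `X^nY^{n+1}` and `X^{n+1}Y^n`.
Then `~I : (X^nY^n) = (X,Y,Z)`: explicitly `X^nY^n ∉ ~I`, `(X,Y)·X^nY^n ⊆ I` and
`X^nY^nZ ∈ I^2 : I ⊆ ~I`.  Consequently `(X,Y,Z)` is an associated prime of `R/~I`,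
although it is not an associated prime of `R/I`. -/
theorem stmt_17 (F : Type*) [Field F] (n : ℕ) (hn : 2 ≤ n)
    (X Y Z : MvPolynomial (Fin 3) F)
    (hX : X = MvPolynomial.X 0) (hY : Y = MvPolynomial.X 1) (hZ : Z = MvPolynomial.X 2)
    (I : Ideal (MvPolynomial (Fin 3) F))
    (hI : I = Ideal.span
      ({p | ∃ i : ℕ, i ≤ 2 * n ∧ i ≠ n ∧ p = X ^ i * Y ^ (2 * n - i) * Z} ∪
       {X ^ n * Y ^ (n + 1), X ^ (n + 1) * Y ^ n})) :
    (rrPow I 1).colon (Ideal.span {X ^ n * Y ^ n}) = Ideal.span {X, Y, Z} ∧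
    X ^ n * Y ^ n ∉ rrPow I 1 ∧
    (∀ f ∈ Ideal.span {X, Y}, f * (X ^ n * Y ^ n) ∈ I) ∧
    X ^ n * Y ^ n * Z ∈ (I ^ 2).colon I ∧
    (I ^ 2).colon I ≤ rrPow I 1 ∧
    IsAssociatedPrime (Ideal.span {X, Y, Z}) (MvPolynomial (Fin 3) F ⧸ rrPow I 1) ∧
    ¬ IsAssociatedPrime (Ideal.span {X, Y, Z}) (MvPolynomial (Fin 3) F ⧸ I) := by
  subst hX hY hZ
  rw [span_generators_eq] at hI
  subst hI
  rw [span_X_fin_three]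
  refine ⟨colon_rrPow_genIdeal hn, X_pow_mul_X_pow_not_mem_rrPow_genIdeal n,
    fun f hf ↦ Ideal.mem_colon_span_singleton.mp (span_X_zero_X_one_le_colon_genIdeal n hf),
    X_pow_mul_X_pow_mul_X_mem_sq_colon_genIdeal hn, sq_colon_le_rrPow_one _,
    isAssociatedPrime_quotient_of_colon_eq (MvPolynomial.isMaximal_idealOfVars (Fin 3) F).isPrime
      (by rw [← colon_rrPow_genIdeal hn, Ideal.colon_span]),
    not_isAssociatedPrime_idealOfVars_genIdeal n⟩
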